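/- arXiv:2507.14127 — 3 statements merged into one kernel-verified Lean document; each statement's English description precedes it below -/
import Mathlib

section
/- Golden–Thompson inequality for the second-order cone Jordan algebra: for any m, q ∈ R^n, Tr(e^{m+q}) ≤ Tr(e^m ∘ e^q) = 2 (e^m)ᵀ e^q, where exponentials and trace are taken in the Euclidean Jordan algebra of the second-order cone. -/
open Real Finset

noncomputable section

namespace SOC

/-- A vector in `ℝ^{1+d}` split into a scalar part and a vector part. -/
abbrev Vec (d : ℕ) := ℝ × EuclideanSpace ℝ (Fin d)

variable {d : ℕ}

/-- Membership in the second-order (Lorentz) cone: `‖v⃗‖ ≤ v₀`. -/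
def inCone (v : Vec d) : Prop := ‖v.2‖ ≤ v.1

/-- Euclidean inner product on `ℝ^{1+d}`. -/
def dotp (v w : Vec d) : ℝ := v.1 * w.1 + ∑ i, v.2 i * w.2 i

/-- Euclidean norm on `ℝ^{1+d}`. -/
def enorm (v : Vec d) : ℝ := Real.sqrt (v.1 ^ 2 + ‖v.2‖ ^ 2)

/-- The soc norm `|v₀| + ‖v⃗‖`. -/
def socNorm (v : Vec d) : ℝ := |v.1| + ‖v.2‖

/-- Jordan-algebra trace `Tr(v) = 2 v₀`. -/
def jtr (v : Vec d) : ℝ := 2 * v.1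

/-- Jordan (circle) product. -/
def jmul (v w : Vec d) : Vec d := (dotp v w, v.1 • w.2 + w.1 • v.2)

/-- The eigenvalue `λ₊ = v₀ + ‖v⃗‖`. -/
def lamP (v : Vec d) : ℝ := v.1 + ‖v.2‖

/-- The eigenvalue `λ₋ = v₀ - ‖v⃗‖`. -/
def lamM (v : Vec d) : ℝ := v.1 - ‖v.2‖

/-- Jordan frame eigenvector `c₊ = (1/2)(1, v⃗/‖v⃗‖)`. -/
def cP (v : Vec d) : Vec d := (1 / 2, (1 / (2 * ‖v.2‖)) • v.2)

/-- Jordan frame eigenvector `c₋ = (1/2)(1, -v⃗/‖v⃗‖)`. -/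
def cM (v : Vec d) : Vec d := (1 / 2, (-(1 / (2 * ‖v.2‖))) • v.2)

/-- Jordan-algebra exponential `e^v = e^{λ₊} c₊ + e^{λ₋} c₋`. -/
def jexp (v : Vec d) : Vec d :=
  ((Real.exp (lamP v) + Real.exp (lamM v)) / 2,
   ((Real.exp (lamP v) - Real.exp (lamM v)) / (2 * ‖v.2‖)) • v.2)

/-- Jordan-algebra square root `√v = √λ₊ c₊ + √λ₋ c₋`. -/
def jsqrt (v : Vec d) : Vec d :=
  ((Real.sqrt (lamP v) + Real.sqrt (lamM v)) / 2,
   ((Real.sqrt (lamP v) - Real.sqrt (lamM v)) / (2 * ‖v.2‖)) • v.2)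

/-- The cone partial order `u ⪯ v`. -/
def cleq (u v : Vec d) : Prop := inCone (v - u)

/-- The identity element `e = (1, 0⃗)`. -/
def idel (d : ℕ) : Vec d := (1, 0)

/-- Arrowhead matrix of `v`. -/
def arw (v : Vec d) : Matrix (Unit ⊕ Fin d) (Unit ⊕ Fin d) ℝ :=
  Matrix.fromBlocks (Matrix.of fun _ _ => v.1) (Matrix.of fun _ i => v.2 i)
    (Matrix.of fun i _ => v.2 i) (v.1 • 1)

/-- View a pair as a plain vector indexed by `Unit ⊕ Fin d`. -/
def toVec (v : Vec d) : (Unit ⊕ Fin d) → ℝ := Sum.elim (fun _ => v.1) (fun i => v.2 i)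

/-- A multicone vector: one Lorentz-cone vector per cone `k`. -/
abbrev MVec {r : ℕ} (n : Fin r → ℕ) := ∀ k, Vec (n k)

variable {r : ℕ} {n : Fin r → ℕ}

/-- Multicone trace. -/
def mtr (v : MVec n) : ℝ := ∑ k, jtr (v k)

/-- Multicone Jordan exponential (cone-wise). -/
def mjexp (v : MVec n) : MVec n := fun k => jexp (v k)

/-- Multicone Jordan product (cone-wise). -/
def mjmul (v w : MVec n) : MVec n := fun k => jmul (v k) (w k)

/-- Multicone cone membership. -/
def minCone (v : MVec n) : Prop := ∀ k, inCone (v k)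

/-- Multicone identity element. -/
def mid (n : Fin r → ℕ) : MVec n := fun k => idel (n k)

end SOC

/-!
Write `m = (a, x)` and `q = (b, y)` with `s = ‖x‖`, `t = ‖y‖`, `c = ⟪x, y⟫`. Then
`Tr(e^{m+q}) = 2 e^{a+b} cosh √(s² + t² + 2c)` and
`2 (e^m)ᵀ e^q = 2 e^{a+b} (cosh s cosh t + (sinh s / s) (sinh t / t) c)`.
As a function of `c ∈ [-st, st]` the first is convex, because `cosh √·` is a power series with
nonnegative coefficients, while the second is affine; they agree at the endpoints `c = ±st`,
where both equal `cosh (s ± t)`, so the convex one lies below its chord.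
-/

open scoped Nat InnerProductSpace

namespace Real

lemma hasSum_cosh_sqrt {x : ℝ} (hx : 0 ≤ x) :
    HasSum (fun n ↦ x ^ n / (2 * n)!) (cosh √x) := by
  convert hasSum_cosh √x using 2 with n
  rw [pow_mul, sq_sqrt hx]

lemma convexOn_cosh_sqrt : ConvexOn ℝ (Set.Ici 0) (fun x ↦ cosh √x) := by
  refine ⟨convex_Ici 0, fun x hx y hy a b ha hb hab ↦ ?_⟩
  have hxy : (0 : ℝ) ≤ a • x + b • y := (convex_Ici 0) hx hy ha hb hab
  refine hasSum_le (fun n ↦ ?_) (hasSum_cosh_sqrt hxy)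
    (((hasSum_cosh_sqrt hx).mul_left a).add ((hasSum_cosh_sqrt hy).mul_left b))
  have hpow := (convexOn_pow n).2 hx hy ha hb hab
  simp only [smul_eq_mul] at hpow ⊢
  rw [mul_div_assoc', mul_div_assoc', ← add_div]
  gcongr

lemma cosh_sqrt_le {s t c : ℝ} (hs : 0 ≤ s) (ht : 0 ≤ t) (hc : |c| ≤ s * t) :
    cosh √(s ^ 2 + t ^ 2 + 2 * c) ≤ cosh s * cosh t + sinh s / s * (sinh t / t) * c := by
  -- `θ` places `c` on the chord from `-st` to `st`; if `st = 0` then `c = 0` and `θ` is the junk `0`.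
  set θ := c / (s * t)
  have hθ : |θ| ≤ 1 := by
    rw [abs_div, abs_of_nonneg (mul_nonneg hs ht)]
    exact div_le_one_of_le₀ hc (mul_nonneg hs ht)
  have hc_eq : c = s * t * θ := by
    rcases (mul_nonneg hs ht).eq_or_lt with hst | hst
    · rw [← hst, zero_mul]
      exact abs_nonpos_iff.mp (hst ▸ hc)
    · exact (mul_div_cancel₀ c hst.ne').symm
  obtain ⟨hθ₁, hθ₂⟩ := abs_le.mp hθ
  have hchord := convexOn_cosh_sqrt.2 (Set.mem_Ici.mpr (sq_nonneg (s + t)))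
    (Set.mem_Ici.mpr (sq_nonneg (s - t))) (by linarith : 0 ≤ (1 + θ) / 2)
    (by linarith : 0 ≤ (1 - θ) / 2) (by ring)
  simp only [smul_eq_mul, sqrt_sq (add_nonneg hs ht), sqrt_sq_eq_abs, cosh_abs] at hchord
  calc cosh √(s ^ 2 + t ^ 2 + 2 * c)
      = cosh √((1 + θ) / 2 * (s + t) ^ 2 + (1 - θ) / 2 * (s - t) ^ 2) := by
        rw [hc_eq]; ring_nf
    _ ≤ (1 + θ) / 2 * cosh (s + t) + (1 - θ) / 2 * cosh (s - t) := hchord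
    _ = cosh s * cosh t + sinh s / s * (sinh t / t) * c := by
        rw [cosh_add, cosh_sub]; ring

end Real

lemma norm_add_eq_sqrt_real {E : Type*} [NormedAddCommGroup E] [InnerProductSpace ℝ E] (x y : E) :
    ‖x + y‖ = √(‖x‖ ^ 2 + ‖y‖ ^ 2 + 2 * ⟪x, y⟫_ℝ) := by
  rw [add_right_comm, ← norm_add_sq_real, sqrt_sq (norm_nonneg _)]

namespace SOC

variable {d : ℕ}

lemma jtr_jmul (v w : Vec d) : jtr (jmul v w) = 2 * dotp v w := rfl

lemma dotp_eq_inner (v w : Vec d) : dotp v w = v.1 * w.1 + ⟪v.2, w.2⟫_ℝ := by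
  simp [dotp, PiLp.inner_apply, mul_comm]

lemma jexp_fst (v : Vec d) : (jexp v).1 = exp v.1 * cosh ‖v.2‖ := by
  simp only [jexp, lamP, lamM, cosh_eq, sub_eq_add_neg, exp_add]
  ring

lemma jexp_snd (v : Vec d) : (jexp v).2 = (exp v.1 * (sinh ‖v.2‖ / ‖v.2‖)) • v.2 := by
  simp only [jexp, lamP, lamM, sinh_eq, sub_eq_add_neg, exp_add]
  congr 1
  ring

lemma dotp_jexp (m q : Vec d) :
    dotp (jexp m) (jexp q) = exp (m.1 + q.1) *
      (cosh ‖m.2‖ * cosh ‖q.2‖ + sinh ‖m.2‖ / ‖m.2‖ * (sinh ‖q.2‖ / ‖q.2‖) * ⟪m.2, q.2⟫_ℝ) := by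
  rw [dotp_eq_inner, jexp_fst, jexp_fst, jexp_snd, jexp_snd, real_inner_smul_left,
    real_inner_smul_right, exp_add]
  ring

end SOC

/-- Golden–Thompson inequality for the second-order cone Jordan
algebra: `Tr(e^{m+q}) ≤ Tr(e^m ∘ e^q) = 2 (e^m)ᵀ e^q`. -/
theorem golden_thompson (d : ℕ) (m q : SOC.Vec d) :
    SOC.jtr (SOC.jexp (m + q)) ≤ SOC.jtr (SOC.jmul (SOC.jexp m) (SOC.jexp q)) ∧
    SOC.jtr (SOC.jmul (SOC.jexp m) (SOC.jexp q)) =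
      2 * SOC.dotp (SOC.jexp m) (SOC.jexp q) := by
  refine ⟨?_, SOC.jtr_jmul _ _⟩
  rw [SOC.jtr_jmul, SOC.jtr, SOC.jexp_fst, SOC.dotp_jexp, Prod.fst_add, Prod.snd_add,
    norm_add_eq_sqrt_real]
  gcongr
  exact cosh_sqrt_le (norm_nonneg _) (norm_nonneg _) (abs_real_inner_le_norm _ _)
end
end

section
/- Let σ(x) = 1/(1 + e^{βx}) for β > 0. Then σ(x) = (1/2)(1 − tanh(βx/2)). Moreover, applying σ to the eigenvalues ±||u⃗|| of the off-diagonal part of an arrowhead matrix yields: for u = (u_0, u⃗), σ(||u⃗||)·c₊(u) + σ(−||u⃗||)·c₋(u) = C·√p where p = e^{−u'}/Tr(e^{−u'}) for u' = (0, u⃗), and the normalization constant C = √(1 + e^{2||u⃗||}) / (√2 (1 + e^{||u⃗||})) satisfies C ≥ 1/2 for all u⃗. -/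
open Real Finset

noncomputable section

/-! Everything lives in the Jordan frame `c₊, c₋` of `u' = (0, u⃗)`: a function applied in the Jordan
algebra acts on `a c₊ + b c₋` coefficientwise. With `s = β‖u⃗‖` we have `-βu' = -s c₊ + s c₋`, so the
Gibbs vector is `p = (e^{-s} c₊ + e^{s} c₋) / (e^{s} + e^{-s})`, and `C √2 √p` has the coefficients
`1 / (1 + e^{±s})` because `1 + e^{2s} = e^{s} (e^{s} + e^{-s})`. The bound `C ≥ 1/2` is
`2 (1 + x²) ≥ (1 + x)²` at `x = e^{t}`. -/

lemma one_div_one_add_exp_eq_tanh (y : ℝ) :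
    1 / (1 + exp y) = 1 / 2 * (1 - tanh (y / 2)) := by
  have hy : exp y = exp (y / 2) * exp (y / 2) := by rw [← exp_add, add_halves]
  have hneg : exp (-(y / 2)) * exp (y / 2) = 1 := by rw [← exp_add, neg_add_cancel, exp_zero]
  rw [tanh_eq, hy]
  field_simp
  linear_combination (-2 * exp (y / 2)) * hneg

lemma half_le_sqrt_one_add_exp_two_mul_div (t : ℝ) :
    1 / 2 ≤ √(1 + exp (2 * t)) / (√2 * (1 + exp t)) := by
  have hden : 0 < √2 * (1 + exp t) := by positivity
  rw [le_div_iff₀ hden, ← sqrt_sq (by positivity : 0 ≤ 1 / 2 * (√2 * (1 + exp t)))]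
  gcongr
  rw [two_mul, exp_add, mul_pow, mul_pow, sq_sqrt zero_le_two]
  nlinarith [sq_nonneg (exp t - 1)]

lemma sqrt_one_add_exp_two_mul_mul_sqrt (s μ : ℝ) :
    √(1 + exp (2 * s)) * √((exp (-s) + exp s)⁻¹ * μ) = √(exp s * μ) := by
  rw [← sqrt_mul (by positivity)]
  congr 1
  rw [two_mul, exp_add, exp_neg]
  field_simp

lemma sqrt_one_add_exp_two_mul_div_mul_sqrt (s μ : ℝ) :
    √(1 + exp (2 * s)) / (√2 * (1 + exp s)) * (√2 * √((exp (-s) + exp s)⁻¹ * μ)) =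
      √(exp s * μ) / (1 + exp s) := by
  rw [← sqrt_one_add_exp_two_mul_mul_sqrt]
  field_simp

namespace SOC

variable {d : ℕ}

/-- The Jordan-algebra lift `f(v) = f(λ₊) c₊ + f(λ₋) c₋`, in the coordinates used by `jexp` and
`jsqrt`. -/
def spectralLift (f : ℝ → ℝ) (v : Vec d) : Vec d :=
  ((f (lamP v) + f (lamM v)) / 2, ((f (lamP v) - f (lamM v)) / (2 * ‖v.2‖)) • v.2)

lemma jexp_eq_spectralLift (v : Vec d) : jexp v = spectralLift exp v := rfl

lemma jsqrt_eq_spectralLift (v : Vec d) : jsqrt v = spectralLift sqrt v := rfl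

lemma smul_cP_add_smul_cM (a b : ℝ) (v : Vec d) :
    a • cP v + b • cM v = ((a + b) / 2, ((a - b) / (2 * ‖v.2‖)) • v.2) := by
  ext i
  · simp only [cP, cM, Prod.fst_add, Prod.smul_fst, smul_eq_mul]; ring
  · simp only [cP, cM, Prod.snd_add, Prod.smul_snd, PiLp.add_apply, PiLp.smul_apply, smul_eq_mul]
    ring

lemma jtr_smul_cP_add_smul_cM (a b : ℝ) (v : Vec d) : jtr (a • cP v + b • cM v) = a + b := by
  rw [smul_cP_add_smul_cM, jtr]; ring

lemma lamP_smul_cP_add_lamM_smul_cM {v : Vec d} (hv : v.2 ≠ 0) :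
    lamP v • cP v + lamM v • cM v = v := by
  have hn : ‖v.2‖ ≠ 0 := norm_ne_zero_iff.mpr hv
  rw [smul_cP_add_smul_cM, lamP, lamM]
  ext i
  · simp only; ring
  · simp only [PiLp.smul_apply, smul_eq_mul]
    field_simp
    ring

lemma spectralLift_smul_cP_add_smul_cM (f : ℝ → ℝ) (a b : ℝ) {v : Vec d} (hv : v.2 ≠ 0) :
    spectralLift f (a • cP v + b • cM v) = f a • cP v + f b • cM v := by
  have hn : ‖v.2‖ ≠ 0 := norm_ne_zero_iff.mpr hv
  have hnorm : ‖((a - b) / (2 * ‖v.2‖)) • v.2‖ = |a - b| / 2 := by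
    rw [norm_smul, norm_div, norm_mul, Real.norm_eq_abs, Real.norm_eq_abs, norm_norm]
    field_simp
    simp
  rw [smul_cP_add_smul_cM, smul_cP_add_smul_cM, spectralLift, lamP, lamM, hnorm, smul_smul]
  -- for `a < b` the eigenvalues come out as `b, a` and the frame as `c₋, c₊`
  rcases lt_trichotomy a b with hab | rfl | hab
  · rw [abs_of_neg (sub_neg.mpr hab)]
    have : a - b ≠ 0 := sub_ne_zero.mpr hab.ne
    congr 2
    · ring_nf
    · field_simp
      ring_nf
  · simp
  · rw [abs_of_pos (sub_pos.mpr hab)]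
    have : a - b ≠ 0 := sub_ne_zero.mpr hab.ne'
    congr 2
    · ring_nf
    · field_simp
      ring_nf

end SOC

theorem sigmoid_gibbs_general (d : ℕ) (β : ℝ) (u : SOC.Vec d) (hu : u.2 ≠ 0) :
    (∀ x : ℝ, 1 / (1 + Real.exp (β * x)) = (1 / 2) * (1 - Real.tanh (β * x / 2))) ∧
    ((1 / (1 + Real.exp (β * ‖u.2‖))) • SOC.cP ((0, u.2) : SOC.Vec d) +
        (1 / (1 + Real.exp (β * (-‖u.2‖)))) • SOC.cM ((0, u.2) : SOC.Vec d) =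
      (Real.sqrt (1 + Real.exp (2 * (β * ‖u.2‖))) /
          (Real.sqrt 2 * (1 + Real.exp (β * ‖u.2‖)))) •
        (Real.sqrt 2 •
          SOC.jsqrt ((SOC.jtr (SOC.jexp (-(β • ((0, u.2) : SOC.Vec d)))))⁻¹ •
            SOC.jexp (-(β • ((0, u.2) : SOC.Vec d)))))) ∧
    (∀ t : ℝ, 0 ≤ t →
      1 / 2 ≤ Real.sqrt (1 + Real.exp (2 * t)) / (Real.sqrt 2 * (1 + Real.exp t))) := by
  refine ⟨fun x => one_div_one_add_exp_eq_tanh (β * x), ?_,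
    fun t _ => half_le_sqrt_one_add_exp_two_mul_div t⟩
  set v : SOC.Vec d := (0, u.2)
  set s := β * ‖u.2‖
  have hv : v.2 ≠ 0 := hu
  have hw : -(β • v) = (-s) • SOC.cP v + s • SOC.cM v := by
    conv_lhs => rw [← SOC.lamP_smul_cP_add_lamM_smul_cM hv]
    simp only [SOC.lamP, SOC.lamM, v, s, zero_add, zero_sub]
    module
  rw [hw, SOC.jexp_eq_spectralLift, SOC.spectralLift_smul_cP_add_smul_cM _ _ _ hv,
    SOC.jtr_smul_cP_add_smul_cM]
  simp only [smul_add, smul_smul]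
  rw [SOC.jsqrt_eq_spectralLift, SOC.spectralLift_smul_cP_add_smul_cM _ _ _ hv]
  simp only [smul_add, smul_smul, mul_assoc]
  rw [sqrt_one_add_exp_two_mul_div_mul_sqrt, sqrt_one_add_exp_two_mul_div_mul_sqrt]
  have hσ : 1 / (1 + exp (-s)) = exp s / (1 + exp s) := by
    rw [exp_neg]
    field_simp
    ring
  rw [← exp_add, add_neg_cancel, exp_zero, sqrt_one, sqrt_mul_self (exp_pos s).le, mul_neg, hσ]

/-- The sigmoid `σ(x) = 1/(1+e^{βx})` equals `(1/2)(1 − tanh(βx/2))`;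
applying it to the eigenvalues `±‖u⃗‖` of the off-diagonal part of the arrowhead matrix
yields `C` times the (normalized) Jordan square root of the Gibbs vector of `(0, β u⃗)`,
where `C = √(1+e^{2β‖u⃗‖})/(√2(1+e^{β‖u⃗‖}))`, and `C ≥ 1/2`. -/
theorem sigmoid_gibbs (d : ℕ) (β : ℝ) (hβ : 0 < β) (u : SOC.Vec d) (hu : u.2 ≠ 0) :
    (∀ x : ℝ, 1 / (1 + Real.exp (β * x)) = (1 / 2) * (1 - Real.tanh (β * x / 2))) ∧
    ((1 / (1 + Real.exp (β * ‖u.2‖))) • SOC.cP ((0, u.2) : SOC.Vec d) +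
        (1 / (1 + Real.exp (β * (-‖u.2‖)))) • SOC.cM ((0, u.2) : SOC.Vec d) =
      (Real.sqrt (1 + Real.exp (2 * (β * ‖u.2‖))) /
          (Real.sqrt 2 * (1 + Real.exp (β * ‖u.2‖)))) •
        (Real.sqrt 2 •
          SOC.jsqrt ((SOC.jtr (SOC.jexp (-(β • ((0, u.2) : SOC.Vec d)))))⁻¹ •
            SOC.jexp (-(β • ((0, u.2) : SOC.Vec d)))))) ∧
    (∀ t : ℝ, 0 ≤ t →
      1 / 2 ≤ Real.sqrt (1 + Real.exp (2 * t)) / (Real.sqrt 2 * (1 + Real.exp t))) :=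
  sigmoid_gibbs_general d β u hu
end
end

section
/- For u ≥ 1, the function tanh(uz) is analytic on the interior of the Bernstein ellipse E_ρ with ρ = 1 + π/(4u), and is bounded in modulus by 2√2 there. Consequently there is a degree-d Chebyshev polynomial p with sup_{x∈[−1,1]} |p(x) − tanh(ux)| ≤ (16√2 u/π)·(1 + π/(4u))^{−d}, so degree d = Θ(u·log(u/ε)) suffices for error ε. -/
/-!
On the closed annulus `1 ≤ ‖w‖ ≤ ρ = 1 + π / (4u)` the Joukowski map `w ↦ (w + w⁻¹) / 2` moves
imaginary parts by at most `ρ - 1`, so `u z` stays in the strip `|Im| ≤ π / 4`. There `cosh` has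
no zeros and `‖tanh‖ ≤ 1`, because `‖sinh (x + iy)‖² = sinh² x + sin² y` while
`‖cosh (x + iy)‖² = sinh² x + cos² y`.

For `f` holomorphic on the image of that annulus and bounded by `M` on the image of `‖w‖ = ρ`,
the Fourier coefficients `cₙ` of `θ ↦ f (cos θ)` are contour integrals of
`f ((w + w⁻¹) / 2) / w ^ (n + 1)` over the unit circle; pushing the contour out to `‖w‖ = ρ`
gives `‖cₙ‖ ≤ M ρ⁻ⁿ`. As `cos kθ = Tₖ (cos θ)`, truncating the cosine series after degree `d`
leaves a geometric tail of size at most `2 M ρ⁻ᵈ / (ρ - 1)`, which is `(8u / π) ρ⁻ᵈ` for `tanh`.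
-/

open Real Finset

noncomputable section

/-- The (closed) region bounded by the Bernstein ellipse `E_ρ` with `|v| < ρ`. -/
def bernsteinRegion (ρ : ℝ) : Set ℂ :=
  {z | ∃ v : ℂ, 1 ≤ ‖v‖ ∧ ‖v‖ < ρ ∧ z = (v + v⁻¹) / 2}

namespace Complex

lemma normSq_sinh (z : ℂ) : normSq (sinh z) = Real.sinh z.re ^ 2 + Real.sin z.im ^ 2 := by
  conv_lhs => rw [← re_add_im z, sinh_add, cosh_mul_I, sinh_mul_I]
  simp [normSq_apply, cosh_ofReal_re, sinh_ofReal_re, cos_ofReal_re, sin_ofReal_re]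
  nlinarith [Real.cosh_sq z.re, Real.sin_sq_add_cos_sq z.im]

lemma normSq_cosh (z : ℂ) : normSq (cosh z) = Real.sinh z.re ^ 2 + Real.cos z.im ^ 2 := by
  conv_lhs => rw [← re_add_im z, cosh_add, cosh_mul_I, sinh_mul_I]
  simp [normSq_apply, cosh_ofReal_re, sinh_ofReal_re, cos_ofReal_re, sin_ofReal_re]
  nlinarith [Real.cosh_sq z.re, Real.sin_sq_add_cos_sq z.im]

lemma cosh_ne_zero_of_abs_im_lt {z : ℂ} (h : |z.im| < π / 2) : cosh z ≠ 0 := by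
  have hcos : 0 < Real.cos z.im := Real.cos_pos_of_mem_Ioo ⟨by linarith [neg_abs_le z.im],
    by linarith [le_abs_self z.im]⟩
  rw [← normSq_pos, normSq_cosh]
  positivity

lemma differentiableAt_tanh {z : ℂ} (h : cosh z ≠ 0) : DifferentiableAt ℂ tanh z := by
  have : tanh = fun w => sinh w / cosh w := funext tanh_eq_sinh_div_cosh
  rw [this]
  exact (differentiable_sinh z).div (differentiable_cosh z) h

lemma norm_tanh_le_one_of_abs_im_le {z : ℂ} (h : |z.im| ≤ π / 4) : ‖tanh z‖ ≤ 1 := by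
  have hcosh := cosh_ne_zero_of_abs_im_lt (z := z) (by linarith [pi_pos])
  have hcos2 : 0 ≤ Real.cos (2 * z.im) := Real.cos_nonneg_of_mem_Icc
    ⟨by linarith [neg_abs_le z.im], by linarith [le_abs_self z.im]⟩
  rw [tanh_eq_sinh_div_cosh, norm_div, div_le_one (norm_pos_iff.mpr hcosh), ← sq_le_sq₀
    (norm_nonneg _) (norm_nonneg _), Complex.sq_norm, Complex.sq_norm, normSq_sinh, normSq_cosh]
  nlinarith [Real.cos_sq_add_sin_sq z.im, Real.cos_two_mul z.im]

end Complex

def joukowski (w : ℂ) : ℂ := (w + w⁻¹) / 2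

lemma joukowski_exp_mul_I (θ : ℝ) : joukowski (Complex.exp (θ * Complex.I)) = Real.cos θ := by
  rw [joukowski, ← Complex.exp_neg, Complex.ofReal_cos, Complex.cos, neg_mul]

lemma differentiableAt_joukowski {w : ℂ} (hw : w ≠ 0) : DifferentiableAt ℂ joukowski w :=
  (differentiableAt_id.add (differentiableAt_inv hw)).div_const 2

lemma abs_im_joukowski_le {w : ℂ} (hw : 1 ≤ ‖w‖) : |(joukowski w).im| ≤ ‖w‖ - 1 := by
  have hw0 : 0 < ‖w‖ := by linarith
  have him : (joukowski w).im = w.im * (1 - 1 / ‖w‖ ^ 2) / 2 := by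
    simp [joukowski, Complex.inv_im, Complex.sq_norm]
    ring
  have hfac : 0 ≤ 1 - 1 / ‖w‖ ^ 2 := by
    rw [sub_nonneg, div_le_one (by positivity)]; nlinarith
  rw [him, abs_div, abs_mul, abs_of_nonneg hfac, abs_two]
  calc |w.im| * (1 - 1 / ‖w‖ ^ 2) / 2 ≤ ‖w‖ * (1 - 1 / ‖w‖ ^ 2) / 2 := by
        gcongr; exact Complex.abs_im_le_norm w
    _ ≤ ‖w‖ - 1 := by
        field_simp
        nlinarith

section CosineSeries

local instance : Fact (0 < 2 * π) := ⟨two_pi_pos⟩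

variable {f : ℂ → ℂ}

def cosLift (f : ℂ → ℂ) : AddCircle (2 * π) → ℂ :=
  Function.Periodic.lift (f := fun θ : ℝ => f (Real.cos θ)) fun θ => by simp

def cosFourierCoeff (f : ℂ → ℂ) (n : ℤ) : ℂ := fourierCoeff (cosLift f) n

@[simp] lemma cosLift_coe (f : ℂ → ℂ) (θ : ℝ) : cosLift f θ = f (Real.cos θ) := rfl

lemma continuous_cosLift (hf : ∀ θ : ℝ, ContinuousAt f (Real.cos θ)) :
    Continuous (cosLift f) := by
  rw [(QuotientAddGroup.isQuotientMap_mk _).continuous_iff]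
  show Continuous fun θ : ℝ => f (Real.cos θ)
  exact continuous_iff_continuousAt.2 fun θ => (hf θ).comp (x := θ) (by fun_prop)

lemma fourier_coe_eq_exp (n : ℤ) (θ : ℝ) :
    fourier n (θ : AddCircle (2 * π)) = Complex.exp (n * θ * Complex.I) := by
  rw [fourier_coe_apply]
  congr 1
  have : (π : ℂ) ≠ 0 := by exact_mod_cast pi_ne_zero
  field_simp
  push_cast
  ring

lemma cosFourierCoeff_neg (f : ℂ → ℂ) (n : ℤ) : cosFourierCoeff f (-n) = cosFourierCoeff f n := by
  simp only [cosFourierCoeff, fourierCoeff_eq_intervalIntegral _ _ (-π),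
    show -π + 2 * π = π by ring]
  congr 1
  set g : ℝ → ℂ := fun θ => fourier (-n) (θ : AddCircle (2 * π)) • cosLift f θ
  calc _ = ∫ θ in -π..π, g (-θ) := intervalIntegral.integral_congr fun θ _ => by
          simp only [g, cosLift_coe, Real.cos_neg, fourier_coe_eq_exp, neg_neg, Complex.ofReal_neg]
          push_cast
          ring_nf
    _ = _ := by rw [intervalIntegral.integral_comp_neg g, neg_neg]

lemma cosFourierCoeff_eq_circleIntegral (f : ℂ → ℂ) (n : ℕ) :
    cosFourierCoeff f n =
      (2 * π * Complex.I)⁻¹ * ∮ z in C(0, 1), f (joukowski z) / z ^ (n + 1) := by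
  rw [cosFourierCoeff, fourierCoeff_eq_intervalIntegral _ _ 0, zero_add, circleIntegral,
    ← intervalIntegral.integral_smul, ← intervalIntegral.integral_const_mul]
  refine intervalIntegral.integral_congr fun θ _ => ?_
  have hcm : circleMap 0 1 θ = Complex.exp (θ * Complex.I) := by simp [circleMap]
  have hpow : Complex.exp (θ * Complex.I) / Complex.exp (θ * Complex.I) ^ (n + 1) =
      Complex.exp ((-n : ℤ) * θ * Complex.I) := by
    rw [← Complex.exp_nat_mul, ← Complex.exp_sub]
    push_cast
    ring_nf
  rw [deriv_circleMap, hcm, joukowski_exp_mul_I, smul_eq_mul, smul_eq_mul, cosLift_coe,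
    fourier_coe_eq_exp, Complex.real_smul, ← hpow]
  have : (π : ℂ) ≠ 0 := by exact_mod_cast pi_ne_zero
  push_cast
  field_simp

lemma norm_cosFourierCoeff_le {ρ M : ℝ} (hρ : 1 ≤ ρ)
    (hf : ∀ w : ℂ, 1 ≤ ‖w‖ → ‖w‖ ≤ ρ → DifferentiableAt ℂ f (joukowski w))
    (hM : ∀ w : ℂ, ‖w‖ = ρ → ‖f (joukowski w)‖ ≤ M) (n : ℕ) :
    ‖cosFourierCoeff f n‖ ≤ M / ρ ^ n := by
  have hρ0 : 0 < ρ := by linarith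
  set F : ℂ → ℂ := fun z => f (joukowski z) / z ^ (n + 1)
  have hF : ∀ z : ℂ, 1 ≤ ‖z‖ → ‖z‖ ≤ ρ → DifferentiableAt ℂ F z := fun z h1 h2 => by
    have hz : z ≠ 0 := norm_pos_iff.mp (by linarith)
    exact ((hf z h1 h2).comp z (differentiableAt_joukowski hz)).div
      (differentiableAt_pow _) (pow_ne_zero _ hz)
  have hshift : (∮ z in C(0, ρ), F z) = ∮ z in C(0, 1), F z :=
    Complex.circleIntegral_eq_of_differentiable_on_annulus_off_countable one_pos hρ
      Set.countable_empty
      (fun z ⟨h2, h1⟩ => by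
        simp only [Metric.mem_closedBall, Metric.mem_ball, dist_zero_right, not_lt] at h1 h2
        exact (hF z h1 h2).continuousAt.continuousWithinAt)
      (fun z ⟨⟨h2, h1⟩, _⟩ => by
        simp only [Metric.mem_closedBall, Metric.mem_ball, dist_zero_right, not_le] at h1 h2
        exact hF z h1.le h2.le)
  have hbound : ‖∮ z in C(0, ρ), F z‖ ≤ 2 * π * ρ * (M / ρ ^ (n + 1)) :=
    circleIntegral.norm_integral_le_of_norm_le_const hρ0.le fun z hz => by
      rw [mem_sphere_zero_iff_norm] at hz
      rw [norm_div, norm_pow, hz]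
      gcongr
      exact hM z hz
  rw [cosFourierCoeff_eq_circleIntegral, ← hshift, norm_mul, norm_inv]
  calc ‖2 * (π : ℂ) * Complex.I‖⁻¹ * ‖∮ z in C(0, ρ), F z‖
      ≤ (2 * π)⁻¹ * (2 * π * ρ * (M / ρ ^ (n + 1))) := by
        gcongr
        simp [abs_of_pos pi_pos]
    _ = M / ρ ^ n := by
        field_simp
        ring

lemma summable_cosFourierCoeff {ρ M : ℝ} (hρ : 1 < ρ)
    (hc : ∀ n : ℕ, ‖cosFourierCoeff f n‖ ≤ M / ρ ^ n) : Summable (cosFourierCoeff f) := by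
  have hgeom : Summable fun n : ℕ => M * ρ⁻¹ ^ n :=
    (summable_geometric_of_lt_one (by positivity) (inv_lt_one_of_one_lt₀ hρ)).mul_left M
  have hnat : Summable fun n : ℕ => cosFourierCoeff f n :=
    Summable.of_norm_bounded hgeom fun n => by simpa [div_eq_mul_inv] using hc n
  exact hnat.of_nat_of_neg (by simpa only [cosFourierCoeff_neg] using hnat)

lemma hasSum_cosFourierCoeff_mul_cos (hf : ∀ θ : ℝ, ContinuousAt f (Real.cos θ))
    (hs : Summable (cosFourierCoeff f)) (θ : ℝ) :
    HasSum (fun k : ℕ => 2 * cosFourierCoeff f k * Real.cos (k * θ))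
      (f (Real.cos θ) + cosFourierCoeff f 0) := by
  let g : C(AddCircle (2 * π), ℂ) := ⟨cosLift f, continuous_cosLift hf⟩
  have h := (has_pointwise_sum_fourier_series_of_summable (f := g) hs θ).nat_add_neg
  simp only [show fourierCoeff ⇑g = cosFourierCoeff f from rfl, cosFourierCoeff_neg,
    fourier_coe_eq_exp, smul_eq_mul] at h
  convert h using 1
  · ext k
    rw [Complex.ofReal_cos, Complex.cos]
    push_cast
    ring_nf
  · simp [g]

end CosineSeries

section ChebyshevTruncation

open Polynomial

variable {f : ℂ → ℂ}

-- The sum from `k = 0` counts `c₀` twice: `f (cos θ) = c₀ + ∑_{k ≥ 1} 2 cₖ cos kθ`.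
def chebyshevTrunc (f : ℂ → ℂ) (d : ℕ) : ℝ[X] :=
  ∑ k ∈ range (d + 1), C (2 * cosFourierCoeff f k).re * Chebyshev.T ℝ k -
    C (cosFourierCoeff f 0).re

lemma natDegree_chebyshevTrunc_le (f : ℂ → ℂ) (d : ℕ) : (chebyshevTrunc f d).natDegree ≤ d := by
  refine (natDegree_sub_le _ _).trans (max_le ?_ (by simp))
  refine natDegree_sum_le_of_forall_le _ _ fun k hk => (natDegree_C_mul_le _ _).trans ?_
  rw [Chebyshev.natDegree_T, Int.natAbs_natCast]
  exact Nat.lt_succ_iff.mp (mem_range.mp hk)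

lemma eval_cos_chebyshevTrunc (f : ℂ → ℂ) (d : ℕ) (θ : ℝ) :
    (chebyshevTrunc f d).eval (Real.cos θ) =
      (∑ k ∈ range (d + 1), 2 * cosFourierCoeff f k * Real.cos (k * θ) -
        cosFourierCoeff f 0).re := by
  simp only [chebyshevTrunc, eval_sub, eval_finsetSum, eval_mul, eval_C, Chebyshev.T_real_cos,
    Complex.sub_re, Complex.re_sum, Complex.re_mul_ofReal, Int.cast_natCast]

theorem abs_eval_chebyshevTrunc_sub_re_le {ρ M : ℝ} (hρ : 1 < ρ)
    (hf : ∀ w : ℂ, 1 ≤ ‖w‖ → ‖w‖ ≤ ρ → DifferentiableAt ℂ f (joukowski w))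
    (hM : ∀ w : ℂ, ‖w‖ = ρ → ‖f (joukowski w)‖ ≤ M) (d : ℕ) {x : ℝ} (hx : |x| ≤ 1) :
    |(chebyshevTrunc f d).eval x - (f x).re| ≤ 2 * M / (ρ ^ d * (ρ - 1)) := by
  have hρ0 : 0 < ρ := by linarith
  have hM0 : 0 ≤ M := (norm_nonneg _).trans (hM ρ (by simp [abs_of_pos hρ0]))
  have hc := norm_cosFourierCoeff_le hρ.le hf hM
  have hcont : ∀ θ : ℝ, ContinuousAt f (Real.cos θ) := fun θ => by
    have hw : ‖Complex.exp (θ * Complex.I)‖ = 1 := Complex.norm_exp_ofReal_mul_I θ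
    simpa [joukowski_exp_mul_I] using (hf _ hw.ge (hw.trans_le hρ.le)).continuousAt
  obtain ⟨θ, rfl⟩ : ∃ θ, Real.cos θ = x :=
    ⟨Real.arccos x, Real.cos_arccos (neg_le_of_abs_le hx) (le_of_abs_le hx)⟩
  have hterm (k : ℕ) : ‖2 * cosFourierCoeff f k * Real.cos (k * θ)‖ ≤ 2 * M * ρ⁻¹ ^ k :=
    calc ‖2 * cosFourierCoeff f k * Real.cos (k * θ)‖ ≤ 2 * (M / ρ ^ k) * 1 := by
          rw [norm_mul, norm_mul, Complex.norm_ofNat, Complex.norm_real, Real.norm_eq_abs]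
          gcongr
          exacts [hc k, Real.abs_cos_le_one _]
      _ = 2 * M * ρ⁻¹ ^ k := by rw [inv_pow]; ring
  have hsum := hasSum_cosFourierCoeff_mul_cos hcont (summable_cosFourierCoeff hρ hc) θ
  rw [eval_cos_chebyshevTrunc, ← Complex.sub_re, sub_sub, add_comm _ (f _)]
  calc _ ≤ _ := Complex.abs_re_le_norm _
    _ ≤ 2 * M * ρ⁻¹ ^ (d + 1) / (1 - ρ⁻¹) :=
      norm_sub_le_of_geometric_bound_of_hasSum (inv_lt_one_of_one_lt₀ hρ) hterm hsum (d + 1)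
    _ = 2 * M / (ρ ^ d * (ρ - 1)) := by
      have : ρ - 1 ≠ 0 := by linarith
      rw [inv_pow]
      field_simp
      ring

end ChebyshevTruncation

lemma abs_im_ofReal_mul_joukowski_le {u : ℝ} (hu : 0 < u) {w : ℂ} (hw1 : 1 ≤ ‖w‖)
    (hw : ‖w‖ ≤ 1 + π / (4 * u)) : |((u : ℂ) * joukowski w).im| ≤ π / 4 :=
  calc |((u : ℂ) * joukowski w).im| = u * |(joukowski w).im| := by
        rw [Complex.im_ofReal_mul, abs_mul, abs_of_pos hu]
    _ ≤ u * (π / (4 * u)) := by gcongr; linarith [abs_im_joukowski_le hw1]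
    _ = π / 4 := by field_simp

/-- For `u ≥ 1`, `tanh(uz)` is analytic and bounded by `2√2` on the
interior of the Bernstein ellipse with `ρ = 1 + π/(4u)`, and consequently for every
degree `d` there is a real polynomial approximating `tanh(ux)` on `[-1,1]` with error
`(16√2 u/π)·(1 + π/(4u))^{-d}`. -/
theorem tanh_chebyshev_approx (u : ℝ) (hu : 1 ≤ u) :
    (∀ z ∈ bernsteinRegion (1 + π / (4 * u)),
      DifferentiableAt ℂ (fun w => Complex.tanh ((u : ℂ) * w)) z ∧
      ‖Complex.tanh ((u : ℂ) * z)‖ ≤ 2 * Real.sqrt 2) ∧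
    (∀ d : ℕ, ∃ p : Polynomial ℝ, p.natDegree ≤ d ∧
      ∀ x : ℝ, |x| ≤ 1 →
        |p.eval x - Real.tanh (u * x)| ≤
          (16 * Real.sqrt 2 * u / π) / (1 + π / (4 * u)) ^ d) := by
  have hu0 : 0 < u := by linarith
  have hε : 0 < π / (4 * u) := by positivity
  have key : ∀ w : ℂ, 1 ≤ ‖w‖ → ‖w‖ ≤ 1 + π / (4 * u) →
      DifferentiableAt ℂ (fun z => Complex.tanh (u * z)) (joukowski w) ∧
        ‖Complex.tanh (u * joukowski w)‖ ≤ 1 := fun w h1 h2 => by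
    have him := abs_im_ofReal_mul_joukowski_le hu0 h1 h2
    refine ⟨?_, Complex.norm_tanh_le_one_of_abs_im_le him⟩
    exact (Complex.differentiableAt_tanh (Complex.cosh_ne_zero_of_abs_im_lt
      (by linarith [pi_pos]))).comp _ (differentiableAt_id.const_mul _)
  have hsqrt : 1 ≤ √2 := Real.one_le_sqrt.mpr one_le_two
  refine ⟨fun z ⟨v, hv1, hv2, hz⟩ => ?_, fun d =>
    ⟨chebyshevTrunc (fun z => Complex.tanh (u * z)) d, natDegree_chebyshevTrunc_le _ d,
      fun x hx => ?_⟩⟩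
  · obtain ⟨hdiff, hnorm⟩ := key v hv1 hv2.le
    exact hz ▸ ⟨hdiff, hnorm.trans (by linarith)⟩
  · have h := abs_eval_chebyshevTrunc_sub_re_le (by linarith) (fun w h1 h2 => (key w h1 h2).1)
      (fun w hw => (key w (by linarith) hw.le).2) d hx
    rw [← Complex.ofReal_mul, ← Complex.ofReal_tanh, Complex.ofReal_re] at h
    refine h.trans ?_
    calc 2 * 1 / ((1 + π / (4 * u)) ^ d * (1 + π / (4 * u) - 1))
        = (8 * u / π) / (1 + π / (4 * u)) ^ d := by field_simp; ring
      _ ≤ (16 * √2 * u / π) / (1 + π / (4 * u)) ^ d := by gcongr; linarith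
end
end
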